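/- Let U and W be finite sets and let ρ: U × V → ℝ≥0 be a distortion measure with V finite. For jointly distributed random variables (Û, W, Ŷ, Ẑ) where Ẑ takes values in a set of size s, define Δ(Û | W, Ŷ, Ẑ) = min over functions G: W-alphabet × Ŷ-alphabet × Ẑ-alphabet → V of E[ρ(Û, G(W, Ŷ, Ẑ))]. Then there exists a deterministic function z*: U-alphabet → Ẑ-alphabet such that, with Z* = z*(Û) and the conditional law of (W, Ŷ) given (Û, Ẑ) unchanged, Δ(Û | W, Ŷ, Z*) ≤ Δ(Û | W, Ŷ, Ẑ). -/
import Mathlib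


open scoped BigOperators

/-- replacing the decoder state by a per-source-symbol optimal deterministic
function of the source cannot increase the optimal expected distortion.
The joint law of `(Û, Ẑ, W, Ŷ)` is given by a pmf `μ` on `U' × Z'` (the law of `(Û, Ẑ)`)
together with a conditional law `K` of `(W, Ŷ)` given `(Û, Ẑ)`; the modified joint keeps
`K` and replaces the state by `Z* = z*(Û)`. -/
theorem stmt_4 {U' W' Y' Z' V' : Type}
    [Fintype U'] [Fintype W'] [Fintype Y'] [Fintype Z'] [Fintype V']
    [Nonempty U'] [Nonempty W'] [Nonempty Y'] [Nonempty Z'] [Nonempty V']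
    [DecidableEq U'] [DecidableEq W'] [DecidableEq Y'] [DecidableEq Z']
    (ρ : U' → V' → ℝ) (hρ : ∀ u v, 0 ≤ ρ u v)
    (μ : U' × Z' → ℝ) (hμ0 : ∀ p, 0 ≤ μ p) (hμ1 : ∑ p, μ p = 1)
    (K : U' × Z' → W' × Y' → ℝ) (hK0 : ∀ p q, 0 ≤ K p q) (hK1 : ∀ p, ∑ q, K p q = 1) :
    ∃ zstar : U' → Z',
      (⨅ G : W' × Y' × Z' → V',
        ∑ u, ∑ z, ∑ w, ∑ y,
          ((∑ z', μ (u, z')) * (if z = zstar u then (1:ℝ) else 0)) * K (u, z) (w, y)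
            * ρ u (G (w, y, z)))
      ≤ ⨅ G : W' × Y' × Z' → V',
        ∑ u, ∑ z, ∑ w, ∑ y, μ (u, z) * K (u, z) (w, y) * ρ u (G (w, y, z)) := by
  classical
  -- pick an optimal G for the RHS
  obtain ⟨G₀, hG₀⟩ := Finite.exists_min (fun G : W' × Y' × Z' → V' =>
    ∑ u, ∑ z, ∑ w, ∑ y, μ (u, z) * K (u, z) (w, y) * ρ u (G (w, y, z)))
  set c : U' → Z' → ℝ := fun u z => ∑ w, ∑ y, K (u, z) (w, y) * ρ u (G₀ (w, y, z)) with hc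
  have hmin : ∀ u : U', ∃ z : Z', ∀ z', c u z ≤ c u z' := fun u => Finite.exists_min (c u)
  choose zstar hzstar using hmin
  refine ⟨zstar, ?_⟩
  have hbdd : ∀ f : (W' × Y' × Z' → V') → ℝ, BddBelow (Set.range f) :=
    fun f => (Set.finite_range f).bddBelow
  have hR : (⨅ G : W' × Y' × Z' → V',
      ∑ u, ∑ z, ∑ w, ∑ y, μ (u, z) * K (u, z) (w, y) * ρ u (G (w, y, z)))
      = ∑ u, ∑ z, ∑ w, ∑ y, μ (u, z) * K (u, z) (w, y) * ρ u (G₀ (w, y, z)) :=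
    le_antisymm (ciInf_le (hbdd _) G₀) (le_ciInf hG₀)
  rw [hR]
  refine le_trans (ciInf_le (hbdd _) G₀) ?_
  -- LHS at G₀ equals ∑ u, (∑ z', μ (u,z')) * c u (zstar u)
  have hL : (∑ u, ∑ z, ∑ w, ∑ y,
      ((∑ z', μ (u, z')) * (if z = zstar u then (1:ℝ) else 0)) * K (u, z) (w, y)
        * ρ u (G₀ (w, y, z)))
      = ∑ u, (∑ z', μ (u, z')) * c u (zstar u) := by
    refine Finset.sum_congr rfl fun u _ => ?_
    have : ∀ z : Z', (∑ w, ∑ y,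
        ((∑ z', μ (u, z')) * (if z = zstar u then (1:ℝ) else 0)) * K (u, z) (w, y)
          * ρ u (G₀ (w, y, z)))
        = if z = zstar u then (∑ z', μ (u, z')) * c u z else 0 := by
      intro z
      by_cases h : z = zstar u <;> simp [h, hc, Finset.mul_sum, mul_assoc]
    rw [Finset.sum_congr rfl fun z _ => this z, Finset.sum_ite_eq' Finset.univ (zstar u)]
    simp
  have hRsum : (∑ u, ∑ z, ∑ w, ∑ y, μ (u, z) * K (u, z) (w, y) * ρ u (G₀ (w, y, z)))
      = ∑ u, ∑ z, μ (u, z) * c u z := by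
    refine Finset.sum_congr rfl fun u _ => Finset.sum_congr rfl fun z _ => ?_
    simp [hc, Finset.mul_sum, mul_assoc]
  rw [hL, hRsum]
  refine Finset.sum_le_sum fun u _ => ?_
  rw [Finset.sum_mul]
  refine Finset.sum_le_sum fun z _ => ?_
  exact mul_le_mul_of_nonneg_left (hzstar u z) (hμ0 _)
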